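/- arXiv:2006.03900 — 3 statements merged into one kernel-verified Lean document; each statement's English description precedes it below -/
import Mathlib

section
/- Let k : ℝ → ℝ be a C¹ kernel with compact support, ∫ k = 1, ∫ u k(u) du = 0, M₂ = ∫ u² k(u) du < ∞. Let f : ℝ → ℝ be three times continuously differentiable. Then ∫ −h⁻² k'((a − x)/h)·f(a) da − f'(x) = (h²/2)·M₂·f'''(x) + o(h²) as h → 0⁺. -/
/-!
Substituting `a = x + h u` and integrating by parts once turns the estimator into
`∫ k(u) f'(x + h u) du`. Expanding `f'` to second order at `x`, the moment conditions
`∫ k = 1` and `∫ u k = 0` leave exactly `f'(x) + (h²/2) M₂ f'''(x)`, and since `k` has compact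
support the Taylor remainder `o((h u)²)` integrates against `k` to `o(h²)`.
-/

open MeasureTheory Filter Topology Asymptotics

theorem taylorWithinEval_two_univ (g : ℝ → ℝ) (x y : ℝ) :
    taylorWithinEval g 2 Set.univ x y
      = g x + (y - x) * deriv g x + (y - x) ^ 2 / 2 * iteratedDeriv 2 g x := by
  simp only [taylorWithinEval_succ, taylor_within_zero_eval, iteratedDerivWithin_univ,
    smul_eq_mul]
  rw [iteratedDeriv_one]
  ring

theorem Continuous.integrable_pow_mul_of_hasCompactSupport {k : ℝ → ℝ} (hk : Continuous k)
    (hsupp : HasCompactSupport k) (n : ℕ) : Integrable fun u => u ^ n * k u :=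
  ((continuous_pow n).mul hk).integrable_of_hasCompactSupport hsupp.mul_left

theorem HasCompactSupport.integral_deriv_mul_eq_neg {k g : ℝ → ℝ} (hk : ContDiff ℝ 1 k)
    (hsupp : HasCompactSupport k) (hg : ContDiff ℝ 1 g) :
    ∫ u, deriv k u * g u = -∫ u, k u * deriv g u := by
  have hk' : Continuous (deriv k) := hk.continuous_deriv le_rfl
  have hg' : Continuous (deriv g) := hg.continuous_deriv le_rfl
  rw [integral_mul_deriv_eq_deriv_mul_of_integrable
    (fun u _ => (hk.differentiable one_ne_zero u).hasDerivAt)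
    (fun u _ => (hg.differentiable one_ne_zero u).hasDerivAt)
    ((hk.continuous.mul hg').integrable_of_hasCompactSupport hsupp.mul_right)
    ((hk'.mul hg.continuous).integrable_of_hasCompactSupport hsupp.deriv.mul_right)
    ((hk.continuous.mul hg.continuous).integrable_of_hasCompactSupport hsupp.mul_right), neg_neg]

theorem integral_neg_inv_sq_deriv_kernel_mul {k f : ℝ → ℝ} (hk : ContDiff ℝ 1 k)
    (hsupp : HasCompactSupport k) (hf : ContDiff ℝ 1 f) (x : ℝ) {h : ℝ} (hh : 0 < h) :
    ∫ a, -(h ^ 2)⁻¹ * deriv k ((a - x) / h) * f a = ∫ u, k u * deriv f (x + h * u) := by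
  set G : ℝ → ℝ := fun u => -(h ^ 2)⁻¹ * deriv k u * f (x + h * u)
  have hsubst : ∫ a, -(h ^ 2)⁻¹ * deriv k ((a - x) / h) * f a = h * ∫ u, G u := by
    have hG : ∀ a, -(h ^ 2)⁻¹ * deriv k ((a - x) / h) * f a = G ((a - x) / h) := by
      intro a
      simp only [G, mul_div_cancel₀ _ hh.ne', add_sub_cancel]
    simp_rw [hG]
    rw [integral_sub_right_eq_self (fun b => G (b / h)) x, Measure.integral_comp_div,
      abs_of_pos hh, smul_eq_mul]
  have hscaled : ContDiff ℝ 1 fun u => f (x + h * u) := hf.comp (by fun_prop)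
  have hderiv : ∀ u, deriv (fun u => f (x + h * u)) u = h * deriv f (x + h * u) := fun u =>
    ((hf.differentiable one_ne_zero _).hasDerivAt.comp u
      (((hasDerivAt_id u).const_mul h).const_add x)).deriv.trans (by simp [mul_comm])
  rw [hsubst]
  calc h * ∫ u, G u = -h⁻¹ * ∫ u, deriv k u * f (x + h * u) := by
        simp only [G, mul_assoc, integral_const_mul]
        field_simp
    _ = -h⁻¹ * -∫ u, k u * (h * deriv f (x + h * u)) := by
        rw [hsupp.integral_deriv_mul_eq_neg hk hscaled]
        simp_rw [hderiv]
    _ = ∫ u, k u * deriv f (x + h * u) := by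
        simp_rw [mul_left_comm (k _) h, integral_const_mul]
        field_simp

theorem integral_kernel_mul_sub_taylorWithinEval_two {k g : ℝ → ℝ} (hk : Continuous k)
    (hsupp : HasCompactSupport k) (hk1 : ∫ u, k u = 1) (hk2 : ∫ u, u * k u = 0)
    (hg : Continuous g) (x h : ℝ) :
    ∫ u, k u * (g (x + h * u) - taylorWithinEval g 2 Set.univ x (x + h * u))
      = (∫ u, k u * g (x + h * u)) - g x
          - h ^ 2 / 2 * (∫ u, u ^ 2 * k u) * iteratedDeriv 2 g x := by
  have hmoment := hk.integrable_pow_mul_of_hasCompactSupport hsupp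
  have hk0 : Integrable k := by simpa using hmoment 0
  have hk1' : Integrable fun u => u * k u := by simpa using hmoment 1
  have hkg : Integrable fun u => k u * g (x + h * u) :=
    (hk.mul (hg.comp (by fun_prop))).integrable_of_hasCompactSupport hsupp.mul_right
  simp_rw [taylorWithinEval_two_univ, add_sub_cancel_left]
  have hexpand : ∀ u, k u * (g (x + h * u) - (g x + h * u * deriv g x
      + (h * u) ^ 2 / 2 * iteratedDeriv 2 g x))
      = k u * g (x + h * u) - g x * k u - h * deriv g x * (u * k u)
        - h ^ 2 / 2 * iteratedDeriv 2 g x * (u ^ 2 * k u) := fun u => by ring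
  simp_rw [hexpand]
  rw [integral_sub, integral_sub, integral_sub, integral_const_mul, integral_const_mul,
    integral_const_mul, hk1, hk2]
  · ring
  exacts [hkg, hk0.const_mul _, hkg.sub (hk0.const_mul _), hk1'.const_mul _,
    (hkg.sub (hk0.const_mul _)).sub (hk1'.const_mul _), (hmoment 2).const_mul _]

theorem isLittleO_integral_mul_comp_add_mul {k φ : ℝ → ℝ} (hk : Continuous k)
    (hsupp : HasCompactSupport k) {x : ℝ} {n : ℕ} (hφ : φ =o[𝓝 x] fun y => (y - x) ^ n) :
    (fun h => ∫ u, k u * φ (x + h * u)) =o[𝓝 0] fun h => h ^ n := by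
  rw [isLittleO_iff]
  intro ε hε
  set C := ∫ u, ‖u ^ n * k u‖
  have hC : 0 ≤ C := integral_nonneg fun u => norm_nonneg _
  set ε' := ε / (C + 1)
  have hε' : 0 < ε' := div_pos hε (by linarith)
  obtain ⟨δ, hδ, hφδ⟩ := Metric.eventually_nhds_iff.mp (isLittleO_iff.mp hφ hε')
  obtain ⟨R, hR, hsuppR⟩ := hsupp.isBounded.subset_closedBall_lt 0 0
  filter_upwards [Metric.ball_mem_nhds 0 (div_pos hδ hR)] with h hh
  have hpoint : ∀ u, ‖k u * φ (x + h * u)‖ ≤ ε' * ‖h ^ n‖ * ‖u ^ n * k u‖ := by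
    intro u
    by_cases hku : k u = 0
    · simp [hku]
    have hu : ‖u‖ ≤ R := by simpa using hsuppR (subset_tsupport k hku)
    have hclose : dist (x + h * u) x < δ := by
      rw [dist_eq_norm, add_sub_cancel_left, norm_mul]
      calc ‖h‖ * ‖u‖ ≤ ‖h‖ * R := by gcongr
        _ < δ / R * R := by gcongr; simpa using hh
        _ = δ := div_mul_cancel₀ δ hR.ne'
    calc ‖k u * φ (x + h * u)‖ ≤ ‖k u‖ * (ε' * ‖(x + h * u - x) ^ n‖) := by
          rw [norm_mul]; gcongr; exact hφδ hclose
      _ = ε' * ‖h ^ n‖ * ‖u ^ n * k u‖ := by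
          rw [add_sub_cancel_left, mul_pow, norm_mul, norm_mul]; ring
  calc ‖∫ u, k u * φ (x + h * u)‖
      ≤ ∫ u, ε' * ‖h ^ n‖ * ‖u ^ n * k u‖ :=
        norm_integral_le_of_norm_le
          ((hk.integrable_pow_mul_of_hasCompactSupport hsupp n).norm.const_mul _)
          (Eventually.of_forall hpoint)
    _ = ε * (C / (C + 1)) * ‖h ^ n‖ := by rw [integral_const_mul]; ring
    _ ≤ ε * ‖h ^ n‖ := by
        gcongr
        exact mul_le_of_le_one_right hε.le (div_le_one_of_le₀ (by linarith) (by linarith))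

theorem stmt2_general (k f : ℝ → ℝ) (hk : ContDiff ℝ 1 k) (hsupp : HasCompactSupport k)
    (hk1 : ∫ u, k u = 1) (hk2 : ∫ u, u * k u = 0)
    (hf : ContDiff ℝ 3 f) (x : ℝ) :
    (fun h : ℝ =>
        (∫ a, -(h ^ 2)⁻¹ * deriv k ((a - x) / h) * f a) - deriv f x
          - h ^ 2 / 2 * (∫ u, u ^ 2 * k u) * iteratedDeriv 3 f x)
      =o[𝓝[>] (0 : ℝ)] fun h => h ^ 2 := by
  have hf' : ContDiff ℝ 2 (deriv f) := hf.deriv'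
  refine ((isLittleO_integral_mul_comp_add_mul hk.continuous hsupp
    (taylor_isLittleO_univ (x₀ := x) (n := 2) hf')).mono nhdsWithin_le_nhds).congr' ?_
    EventuallyEq.rfl
  filter_upwards [self_mem_nhdsWithin] with h (hh : 0 < h)
  rw [integral_kernel_mul_sub_taylorWithinEval_two hk.continuous hsupp hk1 hk2 hf'.continuous,
    integral_neg_inv_sq_deriv_kernel_mul hk hsupp (hf.of_le (by norm_num)) x hh,
    iteratedDeriv_succ' (n := 2)]

/-- Bias expansion for kernel-based derivative estimation: the convolution of `f` with the
differentiated kernel converges to `f'(x)` with second-order bias governed by `f'''`. -/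
theorem stmt2 (k f : ℝ → ℝ) (hk : ContDiff ℝ 1 k) (hsupp : HasCompactSupport k)
    (hk1 : ∫ u, k u = 1) (hk2 : ∫ u, u * k u = 0)
    (hM2 : Integrable (fun u => u ^ 2 * k u))
    (hf : ContDiff ℝ 3 f) (x : ℝ) :
    (fun h : ℝ =>
        (∫ a, -(h ^ 2)⁻¹ * deriv k ((a - x) / h) * f a) - deriv f x
          - h ^ 2 / 2 * (∫ u, u ^ 2 * k u) * iteratedDeriv 3 f x)
      =o[𝓝[>] (0 : ℝ)] fun h => h ^ 2 :=
  stmt2_general k f hk hsupp hk1 hk2 hf x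
end

section
/- Let k : ℝ → ℝ be a bounded compactly supported kernel with ∫ k = 1, ∫ u k(u) du = 0, and let π, π̂, q, q̂ : ℝ → ℝ be C² functions of a ∈ [0,1] with π ≥ 1/C₁ > 0 and π̂ ≥ 1/C₁ > 0 and all functions and their first two derivatives uniformly bounded by a constant M at a point τ ∈ (0,1). Then ∫ K_h(a−τ)(1/π̂(a) − 1/π(a))(q(a) − q̂(a))π(a) da = (1/π̂(τ) − 1/π(τ))(q(τ) − q̂(τ))π(τ) + O(h·‖π̂ − π‖_{1,∞}·‖q̂ − q‖_{1,∞}) + O(h²) as h → 0⁺, where ‖f‖_{1,∞} = max(‖f‖_∞, ‖f'‖_∞). -/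
open MeasureTheory Filter Topology

/-- Product-error lemma: the kernel-smoothed product of the two nuisance errors equals its
value at `τ` up to `O(h‖π̂−π‖₁,∞‖q̂−q‖₁,∞) + O(h²)` corrections as `h → 0⁺`. -/
theorem stmt7 (k : ℝ → ℝ) (hkb : ∃ M, ∀ u, |k u| ≤ M) (hsupp : HasCompactSupport k)
    (hk1 : ∫ u, k u = 1) (hk2 : ∫ u, u * k u = 0)
    (π πh q qh : ℝ → ℝ) (C₁ M : ℝ) (hC₁ : 0 < C₁)
    (hπ : ContDiff ℝ 2 π) (hπh : ContDiff ℝ 2 πh)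
    (hq : ContDiff ℝ 2 q) (hqh : ContDiff ℝ 2 qh)
    (hπlb : ∀ a, 1 / C₁ ≤ π a) (hπhlb : ∀ a, 1 / C₁ ≤ πh a)
    (hbd : ∀ g ∈ ({π, πh, q, qh} : Set (ℝ → ℝ)),
      ∀ a, |g a| ≤ M ∧ |deriv g a| ≤ M ∧ |iteratedDeriv 2 g a| ≤ M)
    (τ : ℝ) (hτ : τ ∈ Set.Ioo (0 : ℝ) 1)
    (D₁ D₂ : ℝ)
    (hD₁ : ∀ a, |πh a - π a| ≤ D₁ ∧ |deriv πh a - deriv π a| ≤ D₁)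
    (hD₂ : ∀ a, |qh a - q a| ≤ D₂ ∧ |deriv qh a - deriv q a| ≤ D₂) :
    ∃ C > 0, ∀ᶠ h in 𝓝[>] (0 : ℝ),
      |(∫ a, (h⁻¹ * k ((a - τ) / h)) * (1 / πh a - 1 / π a) * (q a - qh a) * π a)
          - (1 / πh τ - 1 / π τ) * (q τ - qh τ) * π τ|
        ≤ C * (h * D₁ * D₂ + h ^ 2) := by
  have hC₁' : (0:ℝ) < 1 / C₁ := by positivity
  have hπpos : ∀ a, 0 < π a := fun a => lt_of_lt_of_le hC₁' (hπlb a)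
  have hπhpos : ∀ a, 0 < πh a := fun a => lt_of_lt_of_le hC₁' (hπhlb a)
  have hD₁0 : 0 ≤ D₁ := le_trans (abs_nonneg _) (hD₁ 0).1
  have hD₂0 : 0 ≤ D₂ := le_trans (abs_nonneg _) (hD₂ 0).1
  have hπbd : ∀ a, |π a| ≤ M ∧ |deriv π a| ≤ M ∧ |iteratedDeriv 2 π a| ≤ M :=
    hbd π (by simp)
  have hπhbd : ∀ a, |πh a| ≤ M ∧ |deriv πh a| ≤ M ∧ |iteratedDeriv 2 πh a| ≤ M :=
    hbd πh (by simp)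
  have hM0 : 0 < M := lt_of_lt_of_le (hπpos 0) (le_trans (le_abs_self _) (hπbd 0).1)
  -- inverse bound
  have hinvbd : ∀ a, (πh a)⁻¹ ≤ C₁ := by
    intro a
    have := one_div_le_one_div_of_le hC₁' (hπhlb a)
    simpa [one_div, inv_inv] using this
  have hinvpos : ∀ a, 0 < (πh a)⁻¹ := fun a => inv_pos.mpr (hπhpos a)
  -- integrability of k
  have hkint : Integrable k := by
    by_contra hc
    rw [MeasureTheory.integral_undef hc] at hk1
    norm_num at hk1
  -- support radius
  obtain ⟨R₀, hRsub₀⟩ := hsupp.isBounded.subset_closedBall 0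
  set R : ℝ := |R₀| + 1 with hRdef
  have hR0 : 0 < R := by positivity
  have hRsub : tsupport k ⊆ Metric.closedBall 0 R :=
    hRsub₀.trans (Metric.closedBall_subset_closedBall
      (by rw [hRdef]; linarith [le_abs_self R₀]))
  -- the function f
  set f : ℝ → ℝ := fun a => (π a - πh a) * (q a - qh a) * (πh a)⁻¹ with hfdef
  have hfeq : ∀ a, (1 / πh a - 1 / π a) * (q a - qh a) * π a = f a := by
    intro a
    have h1 : π a ≠ 0 := (hπpos a).ne'
    have h2 : πh a ≠ 0 := (hπhpos a).ne'
    field_simp [hfdef]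
    rw [show πh a * f a = (π a - πh a) * (q a - qh a) by
      simp only [hfdef]; rw [mul_comm, mul_assoc, inv_mul_cancel₀ h2, mul_one]]
  -- Lipschitz estimates for the factors
  have lipE₁ : ∀ x y : ℝ, |(π x - πh x) - (π y - πh y)| ≤ D₁ * |x - y| := by
    intro x y
    have hdiff : ∀ z : ℝ, DifferentiableAt ℝ (fun a => π a - πh a) z := fun z =>
      ((hπ.differentiable two_ne_zero) z).sub ((hπh.differentiable two_ne_zero) z)
    have hder : ∀ z : ℝ, ‖deriv (fun a => π a - πh a) z‖ ≤ D₁ := by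
      intro z
      rw [deriv_fun_sub ((hπ.differentiable two_ne_zero) z) ((hπh.differentiable two_ne_zero) z)]
      rw [Real.norm_eq_abs, abs_sub_comm]
      exact (hD₁ z).2
    have := Convex.norm_image_sub_le_of_norm_deriv_le (f := fun a => π a - πh a)
      (s := Set.univ) (fun z _ => hdiff z) (fun z _ => hder z) convex_univ
      (Set.mem_univ y) (Set.mem_univ x)
    simpa [Real.norm_eq_abs] using this
  have lipE₂ : ∀ x y : ℝ, |(q x - qh x) - (q y - qh y)| ≤ D₂ * |x - y| := by
    intro x y
    have hdiff : ∀ z : ℝ, DifferentiableAt ℝ (fun a => q a - qh a) z := fun z =>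
      ((hq.differentiable two_ne_zero) z).sub ((hqh.differentiable two_ne_zero) z)
    have hder : ∀ z : ℝ, ‖deriv (fun a => q a - qh a) z‖ ≤ D₂ := by
      intro z
      rw [deriv_fun_sub ((hq.differentiable two_ne_zero) z) ((hqh.differentiable two_ne_zero) z)]
      rw [Real.norm_eq_abs, abs_sub_comm]
      exact (hD₂ z).2
    have := Convex.norm_image_sub_le_of_norm_deriv_le (f := fun a => q a - qh a)
      (s := Set.univ) (fun z _ => hdiff z) (fun z _ => hder z) convex_univ
      (Set.mem_univ y) (Set.mem_univ x)
    simpa [Real.norm_eq_abs] using this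
  have lipπh : ∀ x y : ℝ, |πh x - πh y| ≤ M * |x - y| := by
    intro x y
    have := Convex.norm_image_sub_le_of_norm_deriv_le (f := πh)
      (s := Set.univ) (fun z _ => (hπh.differentiable two_ne_zero) z)
      (fun z _ => by rw [Real.norm_eq_abs]; exact (hπhbd z).2.1) convex_univ
      (Set.mem_univ y) (Set.mem_univ x)
    simpa [Real.norm_eq_abs] using this
  have lipW : ∀ x y : ℝ, |(πh x)⁻¹ - (πh y)⁻¹| ≤ M * C₁ ^ 2 * |x - y| := by
    intro x y
    have h1 : πh x ≠ 0 := (hπhpos x).ne'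
    have h2 : πh y ≠ 0 := (hπhpos y).ne'
    have key : (πh x)⁻¹ - (πh y)⁻¹ = (πh y - πh x) * ((πh x)⁻¹ * (πh y)⁻¹) := by
      field_simp
    rw [key, abs_mul, abs_mul]
    have b1 : |(πh x)⁻¹| ≤ C₁ := by
      rw [abs_of_pos (hinvpos x)]; exact hinvbd x
    have b2 : |(πh y)⁻¹| ≤ C₁ := by
      rw [abs_of_pos (hinvpos y)]; exact hinvbd y
    have b3 : |πh y - πh x| ≤ M * |y - x| := lipπh y x
    calc |πh y - πh x| * (|(πh x)⁻¹| * |(πh y)⁻¹|) 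
        ≤ (M * |y - x|) * (C₁ * C₁) := by
          apply mul_le_mul b3 _ (by positivity) (by positivity)
          exact mul_le_mul b1 b2 (abs_nonneg _) hC₁.le
      _ = M * C₁ ^ 2 * |x - y| := by rw [abs_sub_comm]; ring
  -- pointwise bounds on the factors
  have bE₁ : ∀ a, |π a - πh a| ≤ D₁ := fun a => by rw [abs_sub_comm]; exact (hD₁ a).1
  have bE₂ : ∀ a, |q a - qh a| ≤ D₂ := fun a => by rw [abs_sub_comm]; exact (hD₂ a).1
  have bW : ∀ a, |(πh a)⁻¹| ≤ C₁ := fun a => by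
    rw [abs_of_pos (hinvpos a)]; exact hinvbd a
  -- Lipschitz bound for f
  set K : ℝ := 2 * C₁ + M * C₁ ^ 2 with hKdef
  have hK0 : 0 < K := by positivity
  have lipf : ∀ x y : ℝ, |f x - f y| ≤ D₁ * D₂ * K * |x - y| := by
    intro x y
    have tele : f x - f y =
        ((π x - πh x) - (π y - πh y)) * (q x - qh x) * (πh x)⁻¹
        + (π y - πh y) * ((q x - qh x) - (q y - qh y)) * (πh x)⁻¹
        + (π y - πh y) * (q y - qh y) * ((πh x)⁻¹ - (πh y)⁻¹) := by
      simp only [hfdef]; ring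
    rw [tele]
    have t1 : |((π x - πh x) - (π y - πh y)) * (q x - qh x) * (πh x)⁻¹|
        ≤ (D₁ * |x - y|) * D₂ * C₁ := by
      rw [abs_mul, abs_mul]
      apply mul_le_mul _ (bW x) (abs_nonneg _) (by positivity)
      exact mul_le_mul (lipE₁ x y) (bE₂ x) (abs_nonneg _) (by positivity)
    have t2 : |(π y - πh y) * ((q x - qh x) - (q y - qh y)) * (πh x)⁻¹|
        ≤ D₁ * (D₂ * |x - y|) * C₁ := by
      rw [abs_mul, abs_mul]
      apply mul_le_mul _ (bW x) (abs_nonneg _) (by positivity)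
      exact mul_le_mul (bE₁ y) (lipE₂ x y) (abs_nonneg _) hD₁0
    have t3 : |(π y - πh y) * (q y - qh y) * ((πh x)⁻¹ - (πh y)⁻¹)|
        ≤ D₁ * D₂ * (M * C₁ ^ 2 * |x - y|) := by
      rw [abs_mul, abs_mul]
      apply mul_le_mul _ (lipW x y) (abs_nonneg _) (by positivity)
      exact mul_le_mul (bE₁ y) (bE₂ y) (abs_nonneg _) hD₁0
    calc |_ + _ + _| ≤ _ := abs_add_le _ _ |>.trans (add_le_add (abs_add_le _ _) le_rfl)
      _ ≤ (D₁ * |x - y|) * D₂ * C₁ + D₁ * (D₂ * |x - y|) * C₁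
            + D₁ * D₂ * (M * C₁ ^ 2 * |x - y|) := by
          exact add_le_add (add_le_add t1 t2) t3
      _ = D₁ * D₂ * K * |x - y| := by rw [hKdef]; ring
  -- bound on f
  have bf : ∀ a, |f a| ≤ D₁ * D₂ * C₁ := by
    intro a
    simp only [hfdef]
    rw [abs_mul, abs_mul]
    apply mul_le_mul _ (bW a) (abs_nonneg _) (by positivity)
    exact mul_le_mul (bE₁ a) (bE₂ a) (abs_nonneg _) hD₁0
  -- continuity of f
  have hfc : Continuous f := by
    apply Continuous.mul
    · exact ((hπ.continuous.sub hπh.continuous).mul (hq.continuous.sub hqh.continuous))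
    · exact hπh.continuous.inv₀ (fun a => (hπhpos a).ne')
  -- the constant
  have hIk0 : 0 ≤ ∫ u, |k u| := integral_nonneg fun u => abs_nonneg _
  refine ⟨K * R * (∫ u, |k u|) + 1, by positivity, ?_⟩
  filter_upwards [self_mem_nhdsWithin] with h hh
  have hh0 : (0:ℝ) < h := hh
  have hne : h ≠ 0 := hh0.ne'
  -- rewrite the integrand using f
  have step0 : (∫ a, (h⁻¹ * k ((a - τ) / h)) * (1 / πh a - 1 / π a) * (q a - qh a) * π a)
      = ∫ a, (h⁻¹ * k ((a - τ) / h)) * f a := by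
    congr 1; funext a
    rw [← hfeq a]; ring
  -- change of variables
  have cov : (∫ a, (h⁻¹ * k ((a - τ) / h)) * f a) = ∫ u, k u * f (u * h + τ) := by
    have e1 : (∫ a, (h⁻¹ * k ((a - τ) / h)) * f a)
        = ∫ x, (h⁻¹ * k (x / h)) * f (x + τ) := by
      rw [← integral_add_right_eq_self (fun a => (h⁻¹ * k ((a - τ) / h)) * f a) τ]
      simp
    rw [e1]
    have e2 : (∫ u, (fun x => (h⁻¹ * k (x / h)) * f (x + τ)) (u * h))
        = |h⁻¹| • ∫ x, (h⁻¹ * k (x / h)) * f (x + τ) :=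
      Measure.integral_comp_mul_right (fun x => (h⁻¹ * k (x / h)) * f (x + τ)) h
    simp only [mul_div_assoc, mul_div_cancel_right₀ _ hne] at e2
    rw [abs_of_pos (inv_pos.mpr hh0), smul_eq_mul] at e2
    have : (∫ x, (h⁻¹ * k (x / h)) * f (x + τ))
        = h * ∫ u, h⁻¹ * k u * f (u * h + τ) := by
      rw [e2, ← mul_assoc, mul_inv_cancel₀ hne, one_mul]
    rw [this, ← MeasureTheory.integral_const_mul]
    congr 1; funext u
    field_simp
  -- integrability facts
  have hmeas : AEStronglyMeasurable (fun u : ℝ => f (u * h + τ)) volume :=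
    (hfc.comp ((continuous_id.mul continuous_const).add continuous_const)).aestronglyMeasurable
  have hint1 : Integrable (fun u => k u * f (u * h + τ)) := by
    have := hkint.bdd_mul (f := fun u : ℝ => f (u * h + τ)) hmeas
      (c := D₁ * D₂ * C₁) (Filter.Eventually.of_forall fun u => by rw [Real.norm_eq_abs]; exact bf _)
    exact this.congr (Filter.Eventually.of_forall fun u => by ring)
  have hint2 : Integrable (fun u => k u * f τ) := hkint.mul_const _
  have hfτ : (∫ u, k u * f τ) = f τ := by
    rw [MeasureTheory.integral_mul_const, hk1, one_mul]
  -- main estimate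
  have main : |(∫ u, k u * f (u * h + τ)) - f τ| ≤ K * R * (∫ u, |k u|) * (h * D₁ * D₂) := by
    rw [← hfτ, ← integral_sub hint1 hint2]
    have heq : ∀ u : ℝ, k u * f (u * h + τ) - k u * f τ = k u * (f (u * h + τ) - f τ) := by
      intro u; ring
    simp only [heq]
    have hg : Integrable (fun u => (D₁ * D₂ * K * (h * R)) * |k u|) :=
      (hkint.abs.const_mul _)
    have hb : ∀ u : ℝ, ‖k u * (f (u * h + τ) - f τ)‖ ≤ (D₁ * D₂ * K * (h * R)) * |k u| := by
      intro u
      rw [Real.norm_eq_abs, abs_mul]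
      by_cases hku : k u = 0
      · simp [hku]
      · have hu : |u| ≤ R := by
          have : u ∈ tsupport k := subset_tsupport k hku
          have := hRsub this
          simpa [Metric.mem_closedBall, Real.dist_eq] using this
        have h1 : |f (u * h + τ) - f τ| ≤ D₁ * D₂ * K * (|u| * h) := by
          have := lipf (u * h + τ) τ
          simpa [abs_mul, abs_of_pos hh0] using this
        calc |k u| * |f (u * h + τ) - f τ| ≤ |k u| * (D₁ * D₂ * K * (|u| * h)) := by
              exact mul_le_mul_of_nonneg_left h1 (abs_nonneg _)
          _ ≤ |k u| * (D₁ * D₂ * K * (R * h)) := by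
              apply mul_le_mul_of_nonneg_left _ (abs_nonneg _)
              apply mul_le_mul_of_nonneg_left _ (by positivity)
              exact mul_le_mul_of_nonneg_right hu hh0.le
          _ = (D₁ * D₂ * K * (h * R)) * |k u| := by ring
    have := MeasureTheory.norm_integral_le_of_norm_le hg (Filter.Eventually.of_forall hb)
    rw [Real.norm_eq_abs] at this
    calc |∫ u, k u * (f (u * h + τ) - f τ)| 
        ≤ ∫ u, (D₁ * D₂ * K * (h * R)) * |k u| := this
      _ = (D₁ * D₂ * K * (h * R)) * ∫ u, |k u| := MeasureTheory.integral_const_mul _ _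
      _ = K * R * (∫ u, |k u|) * (h * D₁ * D₂) := by ring
  rw [step0, cov, hfeq τ]
  calc |(∫ u, k u * f (u * h + τ)) - f τ| 
      ≤ K * R * (∫ u, |k u|) * (h * D₁ * D₂) := main
    _ ≤ (K * R * (∫ u, |k u|) + 1) * (h * D₁ * D₂ + h ^ 2) := by
        have h1 : 0 ≤ h * D₁ * D₂ := by positivity
        have h2 : 0 ≤ h ^ 2 := sq_nonneg h
        have h3 : 0 ≤ K * R * (∫ u, |k u|) := by positivity
        nlinarith
end

section
/- Let w : 𝒮 → ℝ satisfy 0 ≤ w ≤ C₂ and π : 𝒮 × [0,1] → ℝ satisfy π ≥ 1/C₁ > 0, let τ : 𝒮 → (0,1), and let rewards be bounded: |r_t| ≤ R_max for t = 1, …, H. Then ∑_{t=1}^H E[ (w(s_t)/π(τ(s_t)|s_t)) · Var[r_t + v_{t+1}(s_{t+1}) | s_t, τ(s_t)] ] ≤ C₁ C₂ R_max² H², where v_{t+1}(s) = E[∑_{j=t+1}^H r_j | s_{t+1} = s] under the evaluation policy (so v_{H+1} ≡ 0 and |r_t + v_{t+1}| ≤ H·R_max). -/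
/-!
Write `M t := E[∑_{j<H} r_j | ℱ t]` for the Doob martingale of the total return. Since the rewards
before `t` are `ℱ t`-measurable, `r_t + v_{t+1} - v_t` is the martingale increment `M (t+1) - M t`.
Martingale increments are orthogonal, so `E (M (t+1) - M t)² = E M (t+1)² - E M t²`, and the sum of
these over `t < H` telescopes to at most `E (∑_{j<H} r_j)² ≤ (H R_max)²`. The weight in front of
each conditional variance is at most `C₁ C₂`.
-/

open MeasureTheory Filter ProbabilityTheory Finset

section Martingale

variable {Ω : Type*} {m m' m0 : MeasurableSpace Ω} {μ : Measure[m0] Ω} {f : Ω → ℝ}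

lemma integral_sq_sub_condExp [IsProbabilityMeasure μ] (hm : m ≤ m0) (hf : MemLp f 2 μ) :
    ∫ ω, (f ω - (μ[f|m]) ω) ^ 2 ∂μ = ∫ ω, f ω ^ 2 ∂μ - ∫ ω, (μ[f|m]) ω ^ 2 ∂μ := by
  have htotal := integral_condVar_add_variance_condExp hm hf
  rw [variance_eq_sub hf, variance_eq_sub (hf.condExp one_le_two), integral_condExp hm,
    condVar, integral_condExp hm] at htotal
  simp only [Pi.pow_apply, Pi.sub_apply] at htotal
  linarith

lemma integral_sq_condExp_le [IsProbabilityMeasure μ] (hm : m ≤ m0) (hf : MemLp f 2 μ) :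
    ∫ ω, (μ[f|m]) ω ^ 2 ∂μ ≤ ∫ ω, f ω ^ 2 ∂μ := by
  have hnonneg : 0 ≤ ∫ ω, (f ω - (μ[f|m]) ω) ^ 2 ∂μ := integral_nonneg fun ω => sq_nonneg _
  linarith [integral_sq_sub_condExp hm hf]

lemma integral_sq_condExp_sub_condExp [IsProbabilityMeasure μ] (hmm' : m ≤ m') (hm' : m' ≤ m0)
    (hf : MemLp f 2 μ) :
    ∫ ω, ((μ[f|m']) ω - (μ[f|m]) ω) ^ 2 ∂μ
      = ∫ ω, (μ[f|m']) ω ^ 2 ∂μ - ∫ ω, (μ[f|m]) ω ^ 2 ∂μ := by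
  have htower : μ[μ[f|m']|m] =ᵐ[μ] μ[f|m] := condExp_condExp_of_le hmm' hm'
  have hcross : ∫ ω, ((μ[f|m']) ω - (μ[μ[f|m']|m]) ω) ^ 2 ∂μ
      = ∫ ω, ((μ[f|m']) ω - (μ[f|m]) ω) ^ 2 ∂μ :=
    integral_congr_ae (htower.mono fun ω h => by simp only [h])
  have hsq : ∫ ω, (μ[μ[f|m']|m]) ω ^ 2 ∂μ = ∫ ω, (μ[f|m]) ω ^ 2 ∂μ :=
    integral_congr_ae (htower.mono fun ω h => by simp only [h])
  rw [← hcross, ← hsq]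
  exact integral_sq_sub_condExp (hmm'.trans hm') (hf.condExp one_le_two)

lemma sum_integral_sq_condExp_succ_sub_le [IsProbabilityMeasure μ] {ℱ : ℕ → MeasurableSpace Ω}
    (hmono : Monotone ℱ) (hle : ∀ t, ℱ t ≤ m0) (hf : MemLp f 2 μ) (H : ℕ) :
    ∑ t ∈ range H, ∫ ω, ((μ[f|ℱ (t + 1)]) ω - (μ[f|ℱ t]) ω) ^ 2 ∂μ ≤ ∫ ω, f ω ^ 2 ∂μ := by
  rw [sum_congr rfl fun t _ => integral_sq_condExp_sub_condExp (hmono t.le_succ) (hle _) hf,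
    sum_range_sub (fun t => ∫ ω, (μ[f|ℱ t]) ω ^ 2 ∂μ)]
  have hnonneg : 0 ≤ ∫ ω, (μ[f|ℱ 0]) ω ^ 2 ∂μ := integral_nonneg fun ω => sq_nonneg _
  linarith [integral_sq_condExp_le (hle H) hf]

lemma integral_mul_condExp_le [IsFiniteMeasure μ] (hm : m ≤ m0) {g Y : Ω → ℝ} {c : ℝ}
    (hg0 : ∀ ω, 0 ≤ g ω) (hgc : ∀ ω, g ω ≤ c) (hY : 0 ≤ᵐ[μ] Y) :
    ∫ ω, g ω * (μ[Y|m]) ω ∂μ ≤ c * ∫ ω, Y ω ∂μ := by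
  rw [← integral_condExp hm (f := Y), ← integral_const_mul]
  have hcondExp : 0 ≤ᵐ[μ] μ[Y|m] := condExp_nonneg hY
  refine integral_mono_of_nonneg ?_ (integrable_condExp.const_mul c) ?_
  · filter_upwards [hcondExp] with ω hω using mul_nonneg (hg0 ω) hω
  · filter_upwards [hcondExp] with ω hω using mul_le_mul_of_nonneg_right (hgc ω) hω

end Martingale

section Returns

variable {Ω : Type*} {m0 : MeasurableSpace Ω} {μ : Measure[m0] Ω} [IsFiniteMeasure μ]
  {ℱ : ℕ → MeasurableSpace Ω} {r : ℕ → Ω → ℝ}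

lemma condExp_sum_range_ae_eq (hmono : Monotone ℱ) (hle : ∀ t, ℱ t ≤ m0)
    (hr : ∀ j, Integrable (r j) μ) (hradapt : ∀ j, Measurable[ℱ (j + 1)] (r j))
    {t H : ℕ} (htH : t ≤ H) :
    μ[fun ω => ∑ j ∈ range H, r j ω | ℱ t]
      =ᵐ[μ] fun ω => ∑ j ∈ range t, r j ω + (μ[fun ω => ∑ j ∈ Ico t H, r j ω | ℱ t]) ω := by
  have hpast : StronglyMeasurable[ℱ t] fun ω => ∑ j ∈ range t, r j ω :=
    (Finset.measurable_sum _ fun j hj =>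
      (hradapt j).mono (hmono (mem_range.mp hj)) le_rfl).stronglyMeasurable
  have hsplit : (fun ω => ∑ j ∈ range H, r j ω)
      = (fun ω => ∑ j ∈ range t, r j ω) + fun ω => ∑ j ∈ Ico t H, r j ω := by
    funext ω
    exact (sum_range_add_sum_Ico _ htH).symm
  rw [hsplit]
  filter_upwards [condExp_add (integrable_finsetSum _ fun j _ => hr j)
    (integrable_finsetSum _ fun j _ => hr j) (ℱ t)] with ω hω
  rw [hω, Pi.add_apply, condExp_of_stronglyMeasurable (hle t) hpast
    (integrable_finsetSum _ fun j _ => hr j)]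

lemma temporalDifference_ae_eq (hmono : Monotone ℱ) (hle : ∀ t, ℱ t ≤ m0)
    (hr : ∀ j, Integrable (r j) μ) (hradapt : ∀ j, Measurable[ℱ (j + 1)] (r j))
    {t H : ℕ} (ht : t < H) :
    (fun ω => r t ω + (μ[fun ω' => ∑ j ∈ Ico (t + 1) H, r j ω' | ℱ (t + 1)]) ω
        - (μ[fun ω' => ∑ j ∈ Ico t H, r j ω' | ℱ t]) ω)
      =ᵐ[μ] fun ω => (μ[fun ω' => ∑ j ∈ range H, r j ω' | ℱ (t + 1)]) ω
        - (μ[fun ω' => ∑ j ∈ range H, r j ω' | ℱ t]) ω := by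
  filter_upwards [condExp_sum_range_ae_eq hmono hle hr hradapt ht,
    condExp_sum_range_ae_eq hmono hle hr hradapt ht.le] with ω hnext hnow
  rw [hnext, hnow, sum_range_succ]
  ring

end Returns

lemma integral_sq_sum_range_le {Ω : Type*} {m0 : MeasurableSpace Ω} {μ : Measure[m0] Ω}
    [IsProbabilityMeasure μ] {r : ℕ → Ω → ℝ} {R : ℝ} (hr : ∀ j ω, |r j ω| ≤ R) (H : ℕ) :
    ∫ ω, (∑ j ∈ range H, r j ω) ^ 2 ∂μ ≤ (H * R) ^ 2 := by
  have hbound : ∀ ω, |∑ j ∈ range H, r j ω| ≤ H * R := fun ω =>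
    (abs_sum_le_sum_abs _ _).trans (by simpa using sum_le_sum fun j (_ : j ∈ range H) => hr j ω)
  calc ∫ ω, (∑ j ∈ range H, r j ω) ^ 2 ∂μ ≤ ∫ _, (H * R) ^ 2 ∂μ :=
        integral_mono_of_nonneg (Eventually.of_forall fun ω => sq_nonneg _) (integrable_const _)
          (Eventually.of_forall fun ω => sq_le_sq.mpr ((hbound ω).trans (le_abs_self _)))
    _ = (H * R) ^ 2 := by simp

lemma div_le_mul_of_one_div_le {a b c d : ℝ} (hb : 0 ≤ b) (hab : a ≤ b) (hc : 0 < c)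
    (hd : 1 / c ≤ d) : a / d ≤ c * b := calc
  a / d ≤ b / (1 / c) := div_le_div₀ hb hab (by positivity) hd
  _ = c * b := by field_simp

theorem stmt16_general {Ω 𝒮 : Type*} [m0 : MeasurableSpace Ω]
    (μ : Measure Ω) [IsProbabilityMeasure μ]
    (H : ℕ)
    (ℱ : ℕ → MeasurableSpace Ω) (hmono : Monotone ℱ) (hle : ∀ t, ℱ t ≤ m0)
    (s : ℕ → Ω → 𝒮)
    (r : ℕ → Ω → ℝ) (hr : ∀ t, MemLp (r t) 2 μ)
    (hradapt : ∀ t, Measurable[ℱ (t + 1)] (r t))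
    (R_max C₁ C₂ : ℝ) (hRb : ∀ t ω, |r t ω| ≤ R_max)
    (w : 𝒮 → ℝ) (π : 𝒮 → ℝ)
    (hw0 : ∀ x, 0 ≤ w x) (hwC : ∀ x, w x ≤ C₂)
    (hC₁ : 0 < C₁) (hπ : ∀ x, 1 / C₁ ≤ π x) :
    (∑ t ∈ Finset.range H,
        ∫ ω,
          (w (s t ω) / π (s t ω)) *
            (μ[fun ω' =>
                (r t ω' + (μ[fun ω'' => ∑ j ∈ Finset.Ico (t + 1) H, r j ω'' | ℱ (t + 1)]) ω'
                    - (μ[fun ω'' => ∑ j ∈ Finset.Ico t H, r j ω'' | ℱ t]) ω') ^ 2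
               | ℱ t]) ω ∂μ)
      ≤ C₁ * C₂ * R_max ^ 2 * H ^ 2 := by
  obtain ⟨ω₀⟩ := nonempty_of_isProbabilityMeasure μ
  have hπpos : ∀ x, 0 < π x := fun x => (one_div_pos.mpr hC₁).trans_le (hπ x)
  have hC₂ : 0 ≤ C₂ := (hw0 (s 0 ω₀)).trans (hwC _)
  have hCC : 0 ≤ C₁ * C₂ := mul_nonneg hC₁.le hC₂
  have hint : ∀ j, Integrable (r j) μ := fun j => (hr j).integrable one_le_two
  have htotal : MemLp (fun ω => ∑ j ∈ range H, r j ω) 2 μ := memLp_finsetSum _ fun j _ => hr j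
  calc _ ≤ ∑ t ∈ range H, C₁ * C₂ * ∫ ω, ((μ[fun ω' => ∑ j ∈ range H, r j ω' | ℱ (t + 1)]) ω
          - (μ[fun ω' => ∑ j ∈ range H, r j ω' | ℱ t]) ω) ^ 2 ∂μ := by
        refine sum_le_sum fun t ht => ?_
        refine (integral_mul_condExp_le (hle t) (fun ω => div_nonneg (hw0 _) (hπpos _).le)
          (fun ω => div_le_mul_of_one_div_le hC₂ (hwC _) hC₁ (hπ _))
          (Eventually.of_forall fun ω => sq_nonneg _)).trans_eq ?_
        congr 1
        refine integral_congr_ae ?_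
        filter_upwards [temporalDifference_ae_eq hmono hle hint hradapt (mem_range.mp ht)]
          with ω hω using by simp only [hω]
    _ ≤ C₁ * C₂ * ∫ ω, (∑ j ∈ range H, r j ω) ^ 2 ∂μ := by
        rw [← mul_sum]
        exact mul_le_mul_of_nonneg_left (sum_integral_sq_condExp_succ_sub_le hmono hle htotal H) hCC
    _ ≤ C₁ * C₂ * (H * R_max) ^ 2 :=
        mul_le_mul_of_nonneg_left (integral_sq_sum_range_le hRb H) hCC
    _ = C₁ * C₂ * R_max ^ 2 * H ^ 2 := by ring

/-- Horizon-polynomial bound on the leading variance constant of the marginalized DR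
estimator: `∑ₜ E[(w(sₜ)/π(τ(sₜ)|sₜ)) Var[rₜ + v_{t+1} | ℱₜ]] ≤ C₁C₂R_max²H²`, where
`vₜ` is the conditional expectation of the future return. -/
theorem stmt16 {Ω 𝒮 : Type*} [m0 : MeasurableSpace Ω] [MeasurableSpace 𝒮]
    (μ : Measure Ω) [IsProbabilityMeasure μ]
    (H : ℕ) (hH : 1 ≤ H)
    (ℱ : ℕ → MeasurableSpace Ω) (hmono : Monotone ℱ) (hle : ∀ t, ℱ t ≤ m0)
    (s : ℕ → Ω → 𝒮) (hs : ∀ t, Measurable[ℱ t] (s t))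
    (r : ℕ → Ω → ℝ) (hr : ∀ t, MemLp (r t) 2 μ)
    (hradapt : ∀ t, Measurable[ℱ (t + 1)] (r t))
    (R_max C₁ C₂ : ℝ) (hRb : ∀ t ω, |r t ω| ≤ R_max)
    (w : 𝒮 → ℝ) (π : 𝒮 → ℝ)
    (hw0 : ∀ x, 0 ≤ w x) (hwC : ∀ x, w x ≤ C₂)
    (hC₁ : 0 < C₁) (hπ : ∀ x, 1 / C₁ ≤ π x) :
    (∑ t ∈ Finset.range H,
        ∫ ω,
          (w (s t ω) / π (s t ω)) *
            (μ[fun ω' =>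
                (r t ω' + (μ[fun ω'' => ∑ j ∈ Finset.Ico (t + 1) H, r j ω'' | ℱ (t + 1)]) ω'
                    - (μ[fun ω'' => ∑ j ∈ Finset.Ico t H, r j ω'' | ℱ t]) ω') ^ 2
               | ℱ t]) ω ∂μ)
      ≤ C₁ * C₂ * R_max ^ 2 * H ^ 2 :=
  stmt16_general (m0 := m0) μ H ℱ hmono hle s r hr hradapt R_max C₁ C₂ hRb w π hw0 hwC hC₁ hπ
end
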